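/- Intermediate estimate in the proof of the lower bound (3.2) of Proposition 3.1: assume ∫_Ω m < 0, and let ψ ∈ L²(Ω) satisfy ∫ m ψ = 0 and ∫ m ψ² = 1. Then, denoting by ψ̃ := ψ − (1/|Ω|)∫_Ω ψ the zero-average part of ψ, one has 1 ≤ ( esssup_Ω m + ‖m‖_{L²(Ω)}² / |∫_Ω m| ) · ∫_Ω ψ̃². -/

import Mathlib

open MeasureTheory

/-! Write `ψ̃ = ψ - c` for a constant `c` and `A = ∫ m < 0`. The constraints on `ψ` give
`∫ m ψ̃ = -c A` and `∫ m ψ̃² = 1 + c² A`, i.e. `1 = ∫ m ψ̃² + (∫ m ψ̃)² / |A|`. The first term is at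
most `esssup m · ∫ ψ̃²`, and by Cauchy–Schwarz the second is at most `‖m‖₂² ∫ ψ̃² / |A|`. -/

section
variable {α : Type*} [MeasurableSpace α] {μ : Measure α}

theorem sq_integral_mul_le_integral_sq_mul_integral_sq {f g : α → ℝ}
    (hf : MemLp f 2 μ) (hg : MemLp g 2 μ) :
    (∫ x, f x * g x ∂μ) ^ 2 ≤ (∫ x, f x ^ 2 ∂μ) * ∫ x, g x ^ 2 ∂μ := by
  have inner_eq {u v : α → ℝ} (hu : MemLp u 2 μ) (hv : MemLp v 2 μ) :
      inner ℝ (hu.toLp u) (hv.toLp v) = ∫ x, u x * v x ∂μ := by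
    rw [L2.inner_def]
    refine integral_congr_ae ?_
    filter_upwards [hu.coeFn_toLp, hv.coeFn_toLp] with x hux hvx
    rw [hux, hvx, real_inner_eq_re_inner, RCLike.inner_apply]
    simp [mul_comm]
  have := real_inner_mul_inner_self_le (hf.toLp f) (hg.toLp g)
  simp only [inner_eq] at this
  simpa [sq] using this

theorem integral_mul_sq_le_essSup_mul_integral_sq {m g : α → ℝ} {C : ℝ}
    (hm : AEStronglyMeasurable m μ) (hmC : ∀ᵐ x ∂μ, ‖m x‖ ≤ C) (hg : MemLp g 2 μ) :
    ∫ x, m x * g x ^ 2 ∂μ ≤ essSup m μ * ∫ x, g x ^ 2 ∂μ := by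
  have hg2 : Integrable (fun x => g x ^ 2) μ := hg.integrable_sq
  have hm_le : ∀ᵐ x ∂μ, m x ≤ essSup m μ :=
    ae_le_essSup ⟨C, Filter.eventually_map.2 <| hmC.mono fun x hx => (abs_le.1 hx).2⟩
  rw [← integral_const_mul]
  refine integral_mono_ae (hg2.bdd_mul hm hmC) (hg2.const_mul _) ?_
  filter_upwards [hm_le] with x hx
  exact mul_le_mul_of_nonneg_right hx (sq_nonneg _)

theorem integral_mul_sub_const {m ψ : α → ℝ} (hm : Integrable m μ)
    (hmψ : Integrable (fun x => m x * ψ x) μ) (c : ℝ) :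
    ∫ x, m x * (ψ x - c) ∂μ = ∫ x, m x * ψ x ∂μ - c * ∫ x, m x ∂μ := by
  simp_rw [mul_sub]
  rw [integral_sub hmψ (hm.mul_const c), integral_mul_const, mul_comm]

theorem integral_mul_sub_const_sq {m ψ : α → ℝ} (hm : Integrable m μ)
    (hmψ : Integrable (fun x => m x * ψ x) μ) (hmψ2 : Integrable (fun x => m x * ψ x ^ 2) μ)
    (c : ℝ) :
    ∫ x, m x * (ψ x - c) ^ 2 ∂μ
      = ∫ x, m x * ψ x ^ 2 ∂μ - 2 * c * ∫ x, m x * ψ x ∂μ + c ^ 2 * ∫ x, m x ∂μ := by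
  have expand : (fun x => m x * (ψ x - c) ^ 2)
      = fun x => m x * ψ x ^ 2 - 2 * c * (m x * ψ x) + c ^ 2 * m x := by
    funext x; ring
  rw [expand, integral_add, integral_sub hmψ2 (hmψ.const_mul _), integral_const_mul,
    integral_const_mul]
  · exact hmψ2.sub (hmψ.const_mul _)
  · exact hm.const_mul _

theorem one_le_essSup_add_mul_integral_sub_const_sq [IsFiniteMeasure μ] {m ψ : α → ℝ} {C : ℝ}
    (hm : AEStronglyMeasurable m μ) (hmC : ∀ᵐ x ∂μ, ‖m x‖ ≤ C) (hm_neg : ∫ x, m x ∂μ < 0)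
    (hψ : MemLp ψ 2 μ) (horth : ∫ x, m x * ψ x ∂μ = 0) (hnorm : ∫ x, m x * ψ x ^ 2 ∂μ = 1)
    (c : ℝ) :
    1 ≤ (essSup m μ + (∫ x, m x ^ 2 ∂μ) / |∫ x, m x ∂μ|) * ∫ x, (ψ x - c) ^ 2 ∂μ := by
  have hm2 : MemLp m 2 μ := (memLp_top_of_bound hm C hmC).mono_exponent le_top
  have hmi : Integrable m μ := hm2.integrable one_le_two
  have hψc : MemLp (fun x => ψ x - c) 2 μ := hψ.sub (memLp_const c)
  have hmψ : Integrable (fun x => m x * ψ x) μ := (hψ.integrable one_le_two).bdd_mul hm hmC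
  have hmψ2 : Integrable (fun x => m x * ψ x ^ 2) μ := hψ.integrable_sq.bdd_mul hm hmC
  set A := ∫ x, m x ∂μ
  set T := ∫ x, (ψ x - c) ^ 2 ∂μ
  have hI : ∫ x, m x * (ψ x - c) ∂μ = -c * A := by
    rw [integral_mul_sub_const hmi hmψ, horth]; ring
  have hB : ∫ x, m x * (ψ x - c) ^ 2 ∂μ = 1 + c ^ 2 * A := by
    rw [integral_mul_sub_const_sq hmi hmψ hmψ2, horth, hnorm]; ring
  have hess := integral_mul_sq_le_essSup_mul_integral_sq hm hmC hψc
  have hCS := sq_integral_mul_le_integral_sq_mul_integral_sq hm2 hψc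
  rw [hB] at hess
  rw [hI] at hCS
  have hA : 0 < |A| := abs_pos.2 hm_neg.ne
  calc 1 = (1 + c ^ 2 * A) + (-c * A) ^ 2 / |A| := by
        rw [abs_of_neg hm_neg]; field_simp; ring
    _ ≤ essSup m μ * T + (∫ x, m x ^ 2 ∂μ) * T / |A| := by gcongr
    _ = (essSup m μ + (∫ x, m x ^ 2 ∂μ) / |A|) * T := by ring

end

theorem stmt_13_general {N : ℕ} (Ω : Set (Fin N → ℝ))
    (hΩfin : volume Ω < ⊤)
    (μm : Measure (Fin N → ℝ)) (hμm : μm = volume.restrict Ω)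
    (m : (Fin N → ℝ) → ℝ) (hm_meas : Measurable m) (hm_bdd : ∃ C : ℝ, ∀ x, |m x| ≤ C)
    (hm_neg : ∫ x, m x ∂μm < 0)
    (ψ : (Fin N → ℝ) → ℝ) (hψ : MemLp ψ 2 μm)
    (horth : ∫ x, m x * ψ x ∂μm = 0)
    (hnorm : ∫ x, m x * (ψ x) ^ 2 ∂μm = 1)
    (ψt : (Fin N → ℝ) → ℝ)
    (hψt : ∀ x, ψt x = ψ x - (∫ y, ψ y ∂μm) / (volume Ω).toReal) :
    1 ≤ (essSup m μm + (∫ x, (m x) ^ 2 ∂μm) / |∫ x, m x ∂μm|) *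
      ∫ x, (ψt x) ^ 2 ∂μm := by
  obtain ⟨C, hC⟩ := hm_bdd
  have : IsFiniteMeasure μm := by
    subst hμm; exact isFiniteMeasure_restrict.2 hΩfin.ne
  simp_rw [hψt]
  exact one_le_essSup_add_mul_integral_sub_const_sq hm_meas.aestronglyMeasurable
    (.of_forall hC) hm_neg hψ horth hnorm _

/-- intermediate estimate in the proof of the lower bound (3.2) of
Proposition 3.1: if `∫ m < 0`, `∫ m ψ = 0` and `∫ m ψ² = 1`, then
`1 ≤ (esssup m + ‖m‖²_{L²}/|∫ m|) · ∫ ψ̃²`, where `ψ̃` is the zero-average part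
of `ψ`. -/
theorem stmt_13 {N : ℕ} (Ω : Set (Fin N → ℝ)) (hΩmeas : MeasurableSet Ω)
    (hΩpos : 0 < volume Ω) (hΩfin : volume Ω < ⊤)
    (μm : Measure (Fin N → ℝ)) (hμm : μm = volume.restrict Ω)
    (m : (Fin N → ℝ) → ℝ) (hm_meas : Measurable m) (hm_bdd : ∃ C : ℝ, ∀ x, |m x| ≤ C)
    (hm_neg : ∫ x, m x ∂μm < 0)
    (ψ : (Fin N → ℝ) → ℝ) (hψ : MemLp ψ 2 μm)
    (horth : ∫ x, m x * ψ x ∂μm = 0)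
    (hnorm : ∫ x, m x * (ψ x) ^ 2 ∂μm = 1)
    (ψt : (Fin N → ℝ) → ℝ)
    (hψt : ∀ x, ψt x = ψ x - (∫ y, ψ y ∂μm) / (volume Ω).toReal) :
    1 ≤ (essSup m μm + (∫ x, (m x) ^ 2 ∂μm) / |∫ x, m x ∂μm|) *
      ∫ x, (ψt x) ^ 2 ∂μm :=
  stmt_13_general Ω hΩfin μm hμm m hm_meas hm_bdd hm_neg ψ hψ horth hnorm ψt hψt
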